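/- arXiv:2309.17278 — 3 statements merged into one kernel-verified Lean document; each statement's English description precedes it below -/
import Mathlib

section
/- Theorem 2 (certified unlearning bound for strongly convex losses, explicit constants): Let Θ ⊆ E be a convex set and suppose θ ↦ ℓ(θ, z) is L-Lipschitz on Θ for every z ∈ Z, with L > 0. Let 1 ≤ k ≤ n and let D^{(n)}, …, D^{(k)} be a chain of datasets with |D^{(j)}| = j, each D^{(j)} obtained from D^{(j+1)} by removing one element. Suppose each empirical loss f_{D^{(j)}} is differentiable, m-strongly convex on E, and has M-Lipschitz gradient, where 0 < m < M, with global minimizer θ_j* satisfying ∇f_{D^{(j)}}(θ_j*) = 0 and θ_j* ∈ Θ. Set γ = (M − m)/(M + m) and η = 2/(m + M). Let θ̂₀ be obtained by T steps of gradient descent on f_{D^{(n)}} with step size η from an initial point θ₀ with ‖θ₀ − θ_n*‖ ≤ D (D > 0), where T ≥ I − log_γ(Dmn/(2L)) for a natural number I; then let θ̂₁ be obtained by I steps of gradient descent on f_{D^{(k)}} with step size η from θ̂₀. Then |f_{D^{(k)}}(θ̂₁) − f_{D^{(k)}}(θ_k*)| ≤ (M/2) · (2Lγ^I/m)² · (1/n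 + Σ_{j=k+1}^{n} 1/j)². -/
open Set InnerProductSpace RealInnerProductSpace

/-- Empirical loss of a per-sample loss `ℓ` over a dataset (multiset) `D`:
`f_D(θ) = (1/|D|) ∑_{z ∈ D} ℓ(θ, z)`, counting multiplicity. -/
noncomputable def empLoss {E : Type*} [NormedAddCommGroup E] [InnerProductSpace ℝ E]
    {Z : Type*} (ℓ : E → Z → ℝ) (D : Multiset Z) (θ : E) : ℝ :=
  (D.map (fun z => ℓ θ z)).sum / D.card

/-- Gradient-descent iterates on `f` with step size `η` from initial point `θ₀`:
`θ_{t+1} = θ_t − η ∇f(θ_t)`. -/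
noncomputable def gdIter {E : Type*} [NormedAddCommGroup E] [InnerProductSpace ℝ E]
    [CompleteSpace E] (f : E → ℝ) (η : ℝ) (θ₀ : E) : ℕ → E
  | 0 => θ₀
  | t + 1 => gdIter f η θ₀ t - η • gradient f (gdIter f η θ₀ t)

section Aux

set_option linter.unusedSectionVars false

variable {E : Type*} [NormedAddCommGroup E] [InnerProductSpace ℝ E] [CompleteSpace E]

lemma aux_hasDerivAt_line (f : E → ℝ) (hf : Differentiable ℝ f) (x d : E) (t : ℝ) :
    HasDerivAt (fun s : ℝ => f (x + s • d)) ⟪gradient f (x + t • d), d⟫_ℝ t := by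
  have hline : HasDerivAt (fun s : ℝ => x + s • d) d t := by
    simpa using ((hasDerivAt_id t).smul_const d).const_add x
  have hg := (hf (x + t • d)).hasGradientAt.hasFDerivAt
  have h2 := hg.comp_hasDerivAt t hline
  exact h2.congr_deriv (by simp)

lemma grad_ineq_of_convex (f : E → ℝ) (hf : Differentiable ℝ f)
    (hc : ConvexOn ℝ univ f) (x y : E) :
    f x + ⟪gradient f x, y - x⟫_ℝ ≤ f y := by
  set d := y - x with hd
  have hh : ConvexOn ℝ univ (fun s : ℝ => f (x + s • d)) := by
    have h2 := hc.comp_affineMap (AffineMap.lineMap x y : ℝ →ᵃ[ℝ] E)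
    have he : (fun s : ℝ => f (x + s • d)) = f ∘ (AffineMap.lineMap x y : ℝ →ᵃ[ℝ] E) := by
      funext s
      simp [AffineMap.lineMap_apply, hd, add_comm]
    rw [he]
    simpa using h2
  have hder : HasDerivAt (fun s : ℝ => f (x + s • d)) ⟪gradient f x, d⟫_ℝ 0 := by
    have := aux_hasDerivAt_line f hf x d 0
    simpa using this
  have hs := hh.le_slope_of_hasDerivAt (mem_univ (0:ℝ)) (mem_univ (1:ℝ)) one_pos hder
  rw [slope_def_field] at hs
  simp only [one_smul, zero_smul, add_zero, sub_zero, div_one] at hs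
  have h1 : x + d = y := by rw [hd]; abel
  rw [h1] at hs
  linarith

lemma grad_ineq_of_lipschitz (f : E → ℝ) (hf : Differentiable ℝ f) (K : ℝ)
    (hK : ∀ a b : E, ‖gradient f a - gradient f b‖ ≤ K * ‖a - b‖) (x y : E) :
    f y ≤ f x + ⟪gradient f x, y - x⟫_ℝ + K / 2 * ‖y - x‖ ^ 2 := by
  set d := y - x with hd
  set ψ : ℝ → ℝ := fun s =>
    f (x + s • d) - s * ⟪gradient f x, d⟫_ℝ - K / 2 * s ^ 2 * ‖d‖ ^ 2 with hψ
  have hψd : ∀ s : ℝ, HasDerivAt ψ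
      (⟪gradient f (x + s • d), d⟫_ℝ - ⟪gradient f x, d⟫_ℝ - K * s * ‖d‖ ^ 2) s := by
    intro s
    have h1 := aux_hasDerivAt_line f hf x d s
    have h2 : HasDerivAt (fun s : ℝ => s * ⟪gradient f x, d⟫_ℝ) ⟪gradient f x, d⟫_ℝ s := by
      simpa using (hasDerivAt_id s).mul_const (⟪gradient f x, d⟫_ℝ)
    have h3 : HasDerivAt (fun s : ℝ => K / 2 * s ^ 2 * ‖d‖ ^ 2) (K * s * ‖d‖ ^ 2) s := by
      have h4 := ((hasDerivAt_pow 2 s).const_mul (K / 2)).mul_const (‖d‖ ^ 2)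
      exact h4.congr_deriv (by ring)
    exact (h1.sub h2).sub h3
  have hanti : AntitoneOn ψ (Icc (0:ℝ) 1) := by
    apply antitoneOn_of_deriv_nonpos (convex_Icc 0 1)
    · exact fun s _ => (hψd s).differentiableAt.continuousAt.continuousWithinAt
    · exact fun s _ => (hψd s).differentiableAt.differentiableWithinAt
    · intro s hs
      rw [interior_Icc] at hs
      rw [(hψd s).deriv]
      have hb : ⟪gradient f (x + s • d) - gradient f x, d⟫_ℝ ≤ K * s * ‖d‖ ^ 2 := by
        calc ⟪gradient f (x + s • d) - gradient f x, d⟫_ℝ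
            ≤ ‖gradient f (x + s • d) - gradient f x‖ * ‖d‖ := real_inner_le_norm _ _
          _ ≤ (K * ‖(x + s • d) - x‖) * ‖d‖ :=
              mul_le_mul_of_nonneg_right (hK _ _) (norm_nonneg d)
          _ = K * s * ‖d‖ ^ 2 := by
              rw [add_sub_cancel_left, norm_smul, Real.norm_eq_abs, abs_of_pos hs.1]
              ring
      rw [inner_sub_left] at hb
      linarith
  have h01 := hanti (by constructor <;> norm_num) (by constructor <;> norm_num) zero_le_one
  have hψ0 : ψ 0 = f x := by simp [hψ]
  have hψ1 : ψ 1 = f y - ⟪gradient f x, d⟫_ℝ - K / 2 * ‖d‖ ^ 2 := by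
    have h1 : x + (1:ℝ) • d = y := by rw [hd]; simp
    rw [one_smul] at h1
    simp [hψ, h1]
  rw [hψ0, hψ1] at h01
  linarith

lemma hasGradientAt_half_norm_sq (m : ℝ) (x : E) :
    HasGradientAt (fun θ : E => m / 2 * ‖θ‖ ^ 2) (m • x) x := by
  rw [hasGradientAt_iff_hasFDerivAt]
  have h1 : HasFDerivAt (fun θ : E => (⟪θ, θ⟫_ℝ : ℝ))
      ((fderivInnerCLM ℝ (x, x)).comp ((ContinuousLinearMap.id ℝ E).prod
        (ContinuousLinearMap.id ℝ E))) x :=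
    (hasFDerivAt_id x).inner ℝ (hasFDerivAt_id x)
  have h2 := h1.const_mul (m / 2)
  have he : (fun θ : E => m / 2 * ‖θ‖ ^ 2) = fun θ : E => m / 2 * ⟪θ, θ⟫_ℝ := by
    funext θ; rw [real_inner_self_eq_norm_sq]
  rw [he]
  refine h2.congr_fderiv ?_
  ext v
  simp [fderivInnerCLM_apply, real_inner_smul_left, real_inner_comm]
  ring

lemma quad_id (m : ℝ) (x y : E) :
    m / 2 * ‖y‖ ^ 2 - m / 2 * ‖x‖ ^ 2 - m * ⟪x, y - x⟫_ℝ = m / 2 * ‖y - x‖ ^ 2 := by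
  have h1 := norm_sub_sq_real y x
  have h2 : ⟪x, y - x⟫_ℝ = ⟪x, y⟫_ℝ - ‖x‖ ^ 2 := by
    rw [inner_sub_right, real_inner_self_eq_norm_sq]
  have h3 : ⟪y, x⟫_ℝ = ⟪x, y⟫_ℝ := real_inner_comm x y
  rw [h2]
  rw [h3] at h1
  linear_combination (-(m / 2)) * h1

lemma quad_diff_diff (f : E → ℝ) (hf : Differentiable ℝ f) (m : ℝ) :
    Differentiable ℝ (fun θ : E => f θ - m / 2 * ‖θ‖ ^ 2) :=
  hf.sub (fun x => (hasGradientAt_half_norm_sq m x).differentiableAt)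

lemma grad_quad_diff (f : E → ℝ) (hf : Differentiable ℝ f) (m : ℝ) (x : E) :
    gradient (fun θ : E => f θ - m / 2 * ‖θ‖ ^ 2) x = gradient f x - m • x := by
  apply HasGradientAt.gradient
  rw [hasGradientAt_iff_hasFDerivAt]
  have h1 := (hf x).hasGradientAt.hasFDerivAt
  have h2 := (hasGradientAt_half_norm_sq m x).hasFDerivAt
  have h3 := h1.sub h2
  rwa [← map_sub (toDual ℝ E)] at h3

lemma grad_ineq_of_strong (f : E → ℝ) (hf : Differentiable ℝ f) (m : ℝ)
    (hc : ConvexOn ℝ univ (fun θ : E => f θ - m / 2 * ‖θ‖ ^ 2)) (x y : E) :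
    f x + ⟪gradient f x, y - x⟫_ℝ + m / 2 * ‖y - x‖ ^ 2 ≤ f y := by
  have hgdiff := quad_diff_diff f hf m
  have h := grad_ineq_of_convex _ hgdiff hc x y
  rw [grad_quad_diff f hf m x] at h
  simp only [inner_sub_left, real_inner_smul_left] at h
  have := quad_id m x y
  linarith

lemma grad_ineq_ub_shift (f : E → ℝ) (hf : Differentiable ℝ f) (m K : ℝ)
    (hub : ∀ a b : E, f b ≤ f a + ⟪gradient f a, b - a⟫_ℝ + K / 2 * ‖b - a‖ ^ 2) (x y : E) :
    (fun θ : E => f θ - m / 2 * ‖θ‖ ^ 2) y ≤ (fun θ : E => f θ - m / 2 * ‖θ‖ ^ 2) x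
      + ⟪gradient (fun θ : E => f θ - m / 2 * ‖θ‖ ^ 2) x, y - x⟫_ℝ
      + (K - m) / 2 * ‖y - x‖ ^ 2 := by
  have h := hub x y
  rw [grad_quad_diff f hf m x]
  simp only [inner_sub_left, real_inner_smul_left]
  have hq := quad_id m x y
  have : (K - m) / 2 * ‖y - x‖ ^ 2 = K / 2 * ‖y - x‖ ^ 2 - m / 2 * ‖y - x‖ ^ 2 := by ring
  rw [this]
  linarith

lemma key_lower (f : E → ℝ) (hf : Differentiable ℝ f) (hc : ConvexOn ℝ univ f)
    (K : ℝ) (hK : 0 < K)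
    (hub : ∀ a b : E, f b ≤ f a + ⟪gradient f a, b - a⟫_ℝ + K / 2 * ‖b - a‖ ^ 2) (x y : E) :
    f x + ⟪gradient f x, y - x⟫_ℝ + 1 / (2 * K) * ‖gradient f y - gradient f x‖ ^ 2 ≤ f y := by
  set g := gradient f y - gradient f x with hg
  set w := y - (1 / K) • g with hw
  have h1 := grad_ineq_of_convex f hf hc x w
  have h2 := hub y w
  have hwy : w - y = -((1 / K) • g) := by rw [hw]; abel
  have hwx : w - x = (y - x) - (1 / K) • g := by rw [hw]; abel
  have e1 : ⟪gradient f y, w - y⟫_ℝ = -(1 / K) * ⟪gradient f y, g⟫_ℝ := by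
    rw [hwy, inner_neg_right, real_inner_smul_right]; ring
  have e2 : ‖w - y‖ ^ 2 = (1 / K) ^ 2 * ‖g‖ ^ 2 := by
    rw [hwy, norm_neg, norm_smul, Real.norm_eq_abs, mul_pow, sq_abs]
  have e3 : ⟪gradient f x, w - x⟫_ℝ = ⟪gradient f x, y - x⟫_ℝ - (1 / K) * ⟪gradient f x, g⟫_ℝ := by
    rw [hwx, inner_sub_right, real_inner_smul_right]
  have e4 : ⟪gradient f y, g⟫_ℝ - ⟪gradient f x, g⟫_ℝ = ‖g‖ ^ 2 := by
    rw [← inner_sub_left, ← hg, real_inner_self_eq_norm_sq]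
  rw [e1, e2] at h2
  rw [e3] at h1
  have hKne : K ≠ 0 := ne_of_gt hK
  have : K / 2 * ((1 / K) ^ 2 * ‖g‖ ^ 2) = 1 / (2 * K) * ‖g‖ ^ 2 := by field_simp
  rw [this] at h2
  have hfin : -(1 / K) * ⟪gradient f y, g⟫_ℝ + (1 / K) * ⟪gradient f x, g⟫_ℝ
      = -(1 / K) * ‖g‖ ^ 2 := by
    have : -(1 / K) * ⟪gradient f y, g⟫_ℝ + (1 / K) * ⟪gradient f x, g⟫_ℝ
        = -(1 / K) * (⟪gradient f y, g⟫_ℝ - ⟪gradient f x, g⟫_ℝ) := by ring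
    rw [this, e4]
  have h5 : 1 / (2 * K) * ‖g‖ ^ 2 - (1 / K) * ‖g‖ ^ 2 = -(1 / (2 * K)) * ‖g‖ ^ 2 := by
    field_simp; ring
  nlinarith [h1, h2]

lemma cocoercive (f : E → ℝ) (hf : Differentiable ℝ f) (hc : ConvexOn ℝ univ f)
    (K : ℝ) (hK : 0 < K)
    (hub : ∀ a b : E, f b ≤ f a + ⟪gradient f a, b - a⟫_ℝ + K / 2 * ‖b - a‖ ^ 2) (x y : E) :
    ‖gradient f x - gradient f y‖ ^ 2 ≤ K * ⟪gradient f x - gradient f y, x - y⟫_ℝ := by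
  have h1 := key_lower f hf hc K hK hub x y
  have h2 := key_lower f hf hc K hK hub y x
  have e1 : ‖gradient f y - gradient f x‖ = ‖gradient f x - gradient f y‖ := norm_sub_rev _ _
  rw [e1] at h1
  have e2 : ⟪gradient f x, y - x⟫_ℝ + ⟪gradient f y, x - y⟫_ℝ
      = -⟪gradient f x - gradient f y, x - y⟫_ℝ := by
    rw [inner_sub_left]
    have : ⟪gradient f x, y - x⟫_ℝ = -⟪gradient f x, x - y⟫_ℝ := by
      rw [← inner_neg_right]; congr 1; abel
    rw [this]; ring
  have h3 : 2 * (1 / (2 * K)) * ‖gradient f x - gradient f y‖ ^ 2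
      ≤ ⟪gradient f x - gradient f y, x - y⟫_ℝ := by linarith [h1, h2, e2]
  have : 2 * (1 / (2 * K)) = 1 / K := by field_simp
  rw [this] at h3
  calc ‖gradient f x - gradient f y‖ ^ 2 = K * (1 / K * ‖gradient f x - gradient f y‖ ^ 2) := by
        field_simp
    _ ≤ K * ⟪gradient f x - gradient f y, x - y⟫_ℝ := mul_le_mul_of_nonneg_left h3 hK.le

lemma gd_contract (f : E → ℝ) (hf : Differentiable ℝ f) (m M : ℝ) (hm : 0 < m) (hmM : m < M)
    (hsc : ConvexOn ℝ univ (fun θ : E => f θ - m / 2 * ‖θ‖ ^ 2))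
    (hgrad : ∀ a b : E, ‖gradient f a - gradient f b‖ ≤ M * ‖a - b‖) (x y : E) :
    ‖(x - (2 / (m + M)) • gradient f x) - (y - (2 / (m + M)) • gradient f y)‖
      ≤ (M - m) / (M + m) * ‖x - y‖ := by
  set g : E → ℝ := fun θ : E => f θ - m / 2 * ‖θ‖ ^ 2 with hgdef
  have hgdiff : Differentiable ℝ g := quad_diff_diff f hf m
  have hub : ∀ a b : E, f b ≤ f a + ⟪gradient f a, b - a⟫_ℝ + M / 2 * ‖b - a‖ ^ 2 :=
    grad_ineq_of_lipschitz f hf M hgrad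
  have hubg : ∀ a b : E, g b ≤ g a + ⟪gradient g a, b - a⟫_ℝ + (M - m) / 2 * ‖b - a‖ ^ 2 :=
    fun a b => grad_ineq_ub_shift f hf m M hub a b
  have hKpos : (0:ℝ) < M - m := by linarith
  have hco := cocoercive g hgdiff hsc (M - m) hKpos hubg x y
  rw [grad_quad_diff f hf m x, grad_quad_diff f hf m y] at hco
  set G : E := gradient f x - gradient f y with hG
  set Δ : E := x - y with hΔ
  have hgg : gradient f x - m • x - (gradient f y - m • y) = G - m • Δ := by
    rw [hG, hΔ, smul_sub]; abel
  rw [hgg] at hco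
  set A := ‖Δ‖ ^ 2 with hA
  set B := ⟪G, Δ⟫_ℝ with hB
  set C := ‖G‖ ^ 2 with hC
  have hexp1 : ‖G - m • Δ‖ ^ 2 = C - 2 * m * B + m ^ 2 * A := by
    rw [norm_sub_sq_real, real_inner_smul_right, norm_smul, Real.norm_eq_abs, mul_pow, sq_abs,
      hA, hB, hC]
    ring
  have hexp2 : ⟪G - m • Δ, Δ⟫_ℝ = B - m * A := by
    rw [inner_sub_left, real_inner_smul_left, hA, hB, ← real_inner_self_eq_norm_sq]
  rw [hexp1, hexp2] at hco
  have hkey : C + m * M * A ≤ (m + M) * B := by nlinarith [hco]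
  have hMm : (0:ℝ) < m + M := by linarith
  have hlhs : (x - (2 / (m + M)) • gradient f x) - (y - (2 / (m + M)) • gradient f y)
      = Δ - (2 / (m + M)) • G := by
    rw [hΔ, hG, smul_sub]; abel
  rw [hlhs]
  have hsq : ‖Δ - (2 / (m + M)) • G‖ ^ 2
      = A - 2 * (2 / (m + M)) * B + (2 / (m + M)) ^ 2 * C := by
    rw [norm_sub_sq_real, real_inner_smul_right, real_inner_comm G Δ, norm_smul,
      Real.norm_eq_abs, mul_pow, sq_abs, hA, hB, hC]
    ring
  have hAnn : 0 ≤ A := by positivity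
  have hne : m + M ≠ 0 := ne_of_gt hMm
  have hne' : M + m ≠ 0 := by intro h; apply hne; linarith
  have hsqle : ‖Δ - (2 / (m + M)) • G‖ ^ 2 ≤ ((M - m) / (M + m) * ‖Δ‖) ^ 2 := by
    rw [hsq, mul_pow, ← hA]
    have h2 : ((M - m) / (M + m)) ^ 2 * A - (A - 2 * (2 / (m + M)) * B + (2 / (m + M)) ^ 2 * C)
        = (4 / (m + M) ^ 2) * ((m + M) * B - C - m * M * A) := by
      field_simp
      ring
    have h3 : 0 ≤ (4 / (m + M) ^ 2) * ((m + M) * B - C - m * M * A) := by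
      apply mul_nonneg
      · positivity
      · linarith
    linarith [h2, h3]
  have hrhsnn : 0 ≤ (M - m) / (M + m) * ‖Δ‖ :=
    mul_nonneg (div_nonneg (by linarith) (by linarith)) (norm_nonneg _)
  have h := Real.sqrt_le_sqrt hsqle
  rwa [Real.sqrt_sq (norm_nonneg _), Real.sqrt_sq hrhsnn] at h

lemma gd_iter_bound (f : E → ℝ) (η γ : ℝ) (hγ0 : 0 ≤ γ) (θs : E)
    (hfix : gradient f θs = 0)
    (hcontract : ∀ x y : E, ‖(x - η • gradient f x) - (y - η • gradient f y)‖ ≤ γ * ‖x - y‖)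
    (θa : E) : ∀ t : ℕ, ‖gdIter f η θa t - θs‖ ≤ γ ^ t * ‖θa - θs‖ := by
  intro t
  induction t with
  | zero => simp [gdIter]
  | succ t ih =>
    have h := hcontract (gdIter f η θa t) θs
    rw [hfix, smul_zero, sub_zero] at h
    calc ‖gdIter f η θa (t + 1) - θs‖
        = ‖(gdIter f η θa t - η • gradient f (gdIter f η θa t)) - θs‖ := rfl
      _ ≤ γ * ‖gdIter f η θa t - θs‖ := h
      _ ≤ γ * (γ ^ t * ‖θa - θs‖) := mul_le_mul_of_nonneg_left ih hγ0
      _ = γ ^ (t + 1) * ‖θa - θs‖ := by ring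

lemma empLoss_cons {Z : Type*} (ℓ : E → Z → ℝ) (Dm : Multiset Z) (z : Z)
    (hD : Dm.card ≠ 0) (θ : E) :
    ((Dm.card : ℝ) + 1) * empLoss ℓ (z ::ₘ Dm) θ = ℓ θ z + (Dm.card : ℝ) * empLoss ℓ Dm θ := by
  have hc : ((Dm.card : ℝ)) ≠ 0 := Nat.cast_ne_zero.mpr hD
  simp only [empLoss, Multiset.map_cons, Multiset.sum_cons, Multiset.card_cons]
  push_cast
  field_simp

lemma pow_log_bound (γ : ℝ) (hγ0 : 0 < γ) (hγ1 : γ < 1) (c : ℝ) (hc : 0 < c)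
    (I T : ℕ) (hT : (I : ℝ) - Real.log c / Real.log γ ≤ T) :
    γ ^ T ≤ γ ^ I / c := by
  have hlt : Real.log γ < 0 := Real.log_neg hγ0 hγ1
  have h1 : (γ : ℝ) ^ (T : ℝ) ≤ γ ^ ((I : ℝ) - Real.log c / Real.log γ) :=
    Real.rpow_le_rpow_of_exponent_ge hγ0 hγ1.le hT
  rw [Real.rpow_natCast] at h1
  have h2 : γ ^ ((I : ℝ) - Real.log c / Real.log γ) = γ ^ I / c := by
    rw [Real.rpow_sub hγ0, Real.rpow_natCast]
    congr 1
    rw [Real.rpow_def_of_pos hγ0, mul_comm, div_mul_cancel₀ _ (ne_of_lt hlt), Real.exp_log hc]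
  rw [h2] at h1
  exact h1

end Aux

set_option maxHeartbeats 1000000 in
/-- Theorem 2: certified unlearning bound for strongly convex losses,
with explicit constants. -/
theorem certified_unlearning_strongly_convex
    {E : Type*} [NormedAddCommGroup E] [InnerProductSpace ℝ E] [CompleteSpace E]
    {Z : Type*} (ℓ : E → Z → ℝ) (Θ : Set E) (hΘ : Convex ℝ Θ)
    (L : ℝ) (hL : 0 < L)
    (hLip : ∀ z : Z, ∀ x ∈ Θ, ∀ y ∈ Θ, |ℓ x z - ℓ y z| ≤ L * ‖x - y‖)
    (k n : ℕ) (hk : 1 ≤ k) (hkn : k ≤ n)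
    (Dchain : ℕ → Multiset Z)
    (hcard : ∀ j, k ≤ j → j ≤ n → (Dchain j).card = j)
    (hchain : ∀ j, k ≤ j → j < n → ∃ z : Z, Dchain (j + 1) = z ::ₘ Dchain j)
    (m M : ℝ) (hm : 0 < m) (hmM : m < M)
    (hdiff : ∀ j, k ≤ j → j ≤ n → Differentiable ℝ (empLoss ℓ (Dchain j)))
    (hsc : ∀ j, k ≤ j → j ≤ n →
      ConvexOn ℝ Set.univ (fun θ => empLoss ℓ (Dchain j) θ - (m / 2) * ‖θ‖ ^ 2))
    (hgrad : ∀ j, k ≤ j → j ≤ n → ∀ x y : E,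
      ‖gradient (empLoss ℓ (Dchain j)) x - gradient (empLoss ℓ (Dchain j)) y‖ ≤ M * ‖x - y‖)
    (θstar : ℕ → E)
    (hcrit : ∀ j, k ≤ j → j ≤ n → gradient (empLoss ℓ (Dchain j)) (θstar j) = 0)
    (hmem : ∀ j, k ≤ j → j ≤ n → θstar j ∈ Θ)
    (γ η : ℝ) (hγ : γ = (M - m) / (M + m)) (hη : η = 2 / (m + M))
    (θ₀ : E) (D : ℝ) (hD : 0 < D) (hinit : ‖θ₀ - θstar n‖ ≤ D)
    (I T : ℕ)
    (hT : (I : ℝ) - Real.log (D * m * n / (2 * L)) / Real.log γ ≤ T)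
    (θhat₀ θhat₁ : E)
    (hθhat₀ : θhat₀ = gdIter (empLoss ℓ (Dchain n)) η θ₀ T)
    (hθhat₁ : θhat₁ = gdIter (empLoss ℓ (Dchain k)) η θhat₀ I) :
    |empLoss ℓ (Dchain k) θhat₁ - empLoss ℓ (Dchain k) (θstar k)| ≤
      (M / 2) * (2 * L * γ ^ I / m) ^ 2 *
        (1 / n + ∑ j ∈ Finset.Icc (k + 1) n, (1 : ℝ) / j) ^ 2 := by
  have hM : 0 < M := lt_trans hm hmM
  have hMm : (0:ℝ) < m + M := by linarith
  have hγ0 : 0 < γ := by rw [hγ]; apply div_pos <;> linarith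
  have hγ1 : γ < 1 := by rw [hγ, div_lt_one (by linarith)]; linarith
  have hn1 : 1 ≤ n := le_trans hk hkn
  have hn0 : (0:ℝ) < (n:ℝ) := by exact_mod_cast Nat.lt_of_lt_of_le Nat.zero_lt_one hn1
  -- contraction for each empirical loss in the chain
  have hcontr : ∀ j, k ≤ j → j ≤ n → ∀ x y : E,
      ‖(x - η • gradient (empLoss ℓ (Dchain j)) x)
        - (y - η • gradient (empLoss ℓ (Dchain j)) y)‖ ≤ γ * ‖x - y‖ := by
    intro j hj1 hj2 x y
    rw [hη, hγ]
    exact gd_contract (empLoss ℓ (Dchain j)) (hdiff j hj1 hj2) m M hm hmM (hsc j hj1 hj2) (hgrad j hj1 hj2) x y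
  -- per-step stability of minimizers
  have hstab : ∀ j : ℕ, k ≤ j → j < n →
      ‖θstar (j+1) - θstar j‖ ≤ 2 * L / (m * ((j:ℝ)+1)) := by
    intro j hj1 hj2
    obtain ⟨z, hz⟩ := hchain j hj1 hj2
    have hj1n : j + 1 ≤ n := hj2
    have hjk : k ≤ j + 1 := le_trans hj1 (Nat.le_succ j)
    set a := ‖θstar (j+1) - θstar j‖ with hadef
    have ha : 0 ≤ a := norm_nonneg _
    have h1 := grad_ineq_of_strong (empLoss ℓ (Dchain j)) (hdiff j hj1 hj2.le) m
      (hsc j hj1 hj2.le) (θstar j) (θstar (j+1))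
    rw [hcrit j hj1 hj2.le] at h1
    simp only [inner_zero_left, add_zero] at h1
    have h2 := grad_ineq_of_strong (empLoss ℓ (Dchain (j+1))) (hdiff (j+1) hjk hj1n) m
      (hsc (j+1) hjk hj1n) (θstar (j+1)) (θstar j)
    rw [hcrit (j+1) hjk hj1n] at h2
    simp only [inner_zero_left, add_zero] at h2
    have hsym : ‖θstar j - θstar (j+1)‖ = a := norm_sub_rev _ _
    rw [hsym] at h2
    have hcardj : (Dchain j).card = j := hcard j hj1 hj2.le
    have hj0 : j ≠ 0 := by omega
    have hrel : ∀ θ : E, ((j:ℝ) + 1) * empLoss ℓ (Dchain (j+1)) θ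
        = ℓ θ z + (j:ℝ) * empLoss ℓ (Dchain j) θ := by
      intro θ
      have h := empLoss_cons ℓ (Dchain j) z (by rw [hcardj]; exact hj0) θ
      rw [hcardj] at h
      rw [hz]
      exact h
    have hLz := hLip z (θstar j) (hmem j hj1 hj2.le) (θstar (j+1)) (hmem (j+1) hjk hj1n)
    rw [hsym] at hLz
    have habs := (abs_le.mp hLz).2
    have e1 := hrel (θstar j)
    have e2 := hrel (θstar (j+1))
    have hjnn : (0:ℝ) ≤ (j:ℝ) := Nat.cast_nonneg j
    have h1' := mul_le_mul_of_nonneg_left h1 hjnn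
    have h2' := mul_le_mul_of_nonneg_left h2 (by positivity : (0:ℝ) ≤ (j:ℝ) + 1)
    have key : ((2:ℝ) * (j:ℝ) + 1) * (m/2) * a^2 ≤ L * a := by nlinarith [h1', h2', e1, e2, habs]
    rcases eq_or_lt_of_le ha with h0 | hpos
    · rw [← h0]; positivity
    · rw [le_div_iff₀ (by positivity : (0:ℝ) < m * ((j:ℝ)+1))]
      rw [pow_two] at key
      have h' : (((2:ℝ)*(j:ℝ)+1) * (m/2) * a) * a ≤ L * a := by linarith [key]
      have hstep : ((2:ℝ)*(j:ℝ)+1) * (m/2) * a ≤ L := le_of_mul_le_mul_right h' hpos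
      have hmono : a * (m * ((j:ℝ)+1)) ≤ ((2:ℝ)*(j:ℝ)+1) * m * a := by
        nlinarith [mul_nonneg (mul_nonneg hm.le ha) hjnn]
      linarith [hstep, hmono]
  -- telescoping the minimizer drift
  have htel : ∀ j : ℕ, k ≤ j → j ≤ n →
      ‖θstar j - θstar k‖ ≤ ∑ i ∈ Finset.Icc (k+1) j, 2 * L / (m * (i:ℝ)) := by
    intro j hj
    induction j, hj using Nat.le_induction with
    | base =>
      intro _
      rw [Finset.Icc_eq_empty (by omega)]
      simp
    | succ j hkj ih =>
      intro hjn
      have hjlt : j < n := by omega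
      have ihv := ih (by omega)
      have hs := hstab j hkj hjlt
      have htri : ‖θstar (j+1) - θstar k‖ ≤ ‖θstar (j+1) - θstar j‖ + ‖θstar j - θstar k‖ :=
        norm_sub_le_norm_sub_add_norm_sub _ _ _
      rw [Finset.sum_Icc_succ_top (by omega : k + 1 ≤ j + 1)]
      push_cast
      calc ‖θstar (j+1) - θstar k‖
          ≤ ‖θstar (j+1) - θstar j‖ + ‖θstar j - θstar k‖ := htri
        _ ≤ 2 * L / (m * ((j:ℝ)+1)) + ∑ i ∈ Finset.Icc (k+1) j, 2 * L / (m * (i:ℝ)) :=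
            add_le_add hs ihv
        _ = (∑ i ∈ Finset.Icc (k+1) j, 2 * L / (m * (i:ℝ))) + 2 * L / (m * ((j:ℝ)+1)) := by ring
  set Ssum := ∑ j ∈ Finset.Icc (k + 1) n, (1 : ℝ) / (j:ℝ) with hSsum
  have hsum : (∑ i ∈ Finset.Icc (k+1) n, 2 * L / (m * (i:ℝ))) = (2 * L / m) * Ssum := by
    rw [hSsum, Finset.mul_sum]
    apply Finset.sum_congr rfl
    intro i hi
    have hi1 : k + 1 ≤ i := (Finset.mem_Icc.mp hi).1
    have hine : (i:ℝ) ≠ 0 := Nat.cast_ne_zero.mpr (by omega)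
    field_simp
  have hSnn : 0 ≤ Ssum := by
    rw [hSsum]
    apply Finset.sum_nonneg
    intro i _
    positivity
  -- iterate bounds
  have hbn := gd_iter_bound (empLoss ℓ (Dchain n)) η γ hγ0.le (θstar n)
    (hcrit n hkn le_rfl) (hcontr n hkn le_rfl) θ₀
  have hbk := gd_iter_bound (empLoss ℓ (Dchain k)) η γ hγ0.le (θstar k)
    (hcrit k le_rfl hkn) (hcontr k le_rfl hkn) θhat₀
  -- the log-scale bound
  have hc0 : 0 < D * m * (n:ℝ) / (2 * L) := by positivity
  have hpow := pow_log_bound γ hγ0 hγ1 _ hc0 I T hT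
  have hγTD : γ ^ T * D ≤ γ ^ I * (2 * L / (m * (n:ℝ))) := by
    have h := mul_le_mul_of_nonneg_right hpow hD.le
    calc γ ^ T * D ≤ γ ^ I / (D * m * (n:ℝ) / (2 * L)) * D := h
      _ = γ ^ I * (2 * L / (m * (n:ℝ))) := by field_simp
  -- distance bounds
  have h1 : ‖θhat₀ - θstar n‖ ≤ γ ^ T * D := by
    rw [hθhat₀]
    exact le_trans (hbn T) (mul_le_mul_of_nonneg_left hinit (pow_nonneg hγ0.le T))
  have h2 : ‖θstar n - θstar k‖ ≤ (2 * L / m) * Ssum := by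
    rw [← hsum]
    exact htel n hkn le_rfl
  have h3 : ‖θhat₀ - θstar k‖ ≤ γ ^ T * D + (2 * L / m) * Ssum := by
    calc ‖θhat₀ - θstar k‖ ≤ ‖θhat₀ - θstar n‖ + ‖θstar n - θstar k‖ :=
          norm_sub_le_norm_sub_add_norm_sub _ _ _
      _ ≤ γ ^ T * D + (2 * L / m) * Ssum := add_le_add h1 h2
  have hγI : (0:ℝ) ≤ γ ^ I := pow_nonneg hγ0.le I
  have hγI1 : γ ^ I ≤ 1 := pow_le_one₀ hγ0.le hγ1.le
  have h4 : ‖θhat₁ - θstar k‖ ≤ γ ^ I * (γ ^ T * D + (2 * L / m) * Ssum) := by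
    rw [hθhat₁]
    exact le_trans (hbk I) (mul_le_mul_of_nonneg_left h3 hγI)
  set R := 2 * L * γ ^ I / m * (1 / (n:ℝ) + Ssum) with hR
  have h5 : ‖θhat₁ - θstar k‖ ≤ R := by
    have t1 : γ ^ I * (γ ^ T * D) ≤ γ ^ I * (2 * L / (m * (n:ℝ))) := by
      calc γ ^ I * (γ ^ T * D) ≤ γ ^ I * (γ ^ I * (2 * L / (m * (n:ℝ)))) :=
            mul_le_mul_of_nonneg_left hγTD hγI
        _ ≤ 1 * (γ ^ I * (2 * L / (m * (n:ℝ)))) :=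
            mul_le_mul_of_nonneg_right hγI1 (by positivity)
        _ = γ ^ I * (2 * L / (m * (n:ℝ))) := one_mul _
    have e : R = γ ^ I * (2 * L / (m * (n:ℝ))) + γ ^ I * ((2 * L / m) * Ssum) := by
      rw [hR]
      field_simp
    calc ‖θhat₁ - θstar k‖ ≤ γ ^ I * (γ ^ T * D + (2 * L / m) * Ssum) := h4
      _ = γ ^ I * (γ ^ T * D) + γ ^ I * ((2 * L / m) * Ssum) := by ring
      _ ≤ γ ^ I * (2 * L / (m * (n:ℝ))) + γ ^ I * ((2 * L / m) * Ssum) :=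
          add_le_add t1 le_rfl
      _ = R := e.symm
  have hRnn : 0 ≤ R := le_trans (norm_nonneg _) h5
  -- function-value bounds
  have hub := grad_ineq_of_lipschitz (empLoss ℓ (Dchain k)) (hdiff k le_rfl hkn) M
    (hgrad k le_rfl hkn) (θstar k) θhat₁
  rw [hcrit k le_rfl hkn] at hub
  simp only [inner_zero_left, add_zero] at hub
  have hlb := grad_ineq_of_strong (empLoss ℓ (Dchain k)) (hdiff k le_rfl hkn) m
    (hsc k le_rfl hkn) (θstar k) θhat₁
  rw [hcrit k le_rfl hkn] at hlb
  simp only [inner_zero_left, add_zero] at hlb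
  have hsqb : ‖θhat₁ - θstar k‖ ^ 2 ≤ R ^ 2 := pow_le_pow_left₀ (norm_nonneg _) h5 2
  have hBnn : 0 ≤ M / 2 * R ^ 2 := by positivity
  have hnormsq : 0 ≤ m / 2 * ‖θhat₁ - θstar k‖ ^ 2 := by positivity
  have hgoal : (M / 2) * (2 * L * γ ^ I / m) ^ 2
      * (1 / (n:ℝ) + Ssum) ^ 2 = M / 2 * R ^ 2 := by
    rw [hR, mul_pow]
    ring
  rw [hSsum] at hgoal
  rw [hgoal]
  rw [abs_le]
  constructor
  · linarith
  · have : M / 2 * ‖θhat₁ - θstar k‖ ^ 2 ≤ M / 2 * R ^ 2 :=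
      mul_le_mul_of_nonneg_left hsqb (by positivity)
    linarith
end

section
/- Theorem 2, logarithmic form: Under the same hypotheses as the explicit-constant version of Theorem 2 (convex set Θ ⊆ E; per-sample losses ℓ(·, z) L-Lipschitz on Θ with L > 0; a chain of datasets D^{(n)}, …, D^{(k)} with 1 ≤ k ≤ n, |D^{(j)}| = j, each obtained from the previous by removing one element; each f_{D^{(j)}} differentiable, m-strongly convex on E with M-Lipschitz gradient, 0 < m < M, and global minimizer θ_j* ∈ Θ with vanishing gradient; γ = (M − m)/(M + m), η = 2/(m + M); θ̂₀ obtained by T steps of gradient descent on f_{D^{(n)}} from θ₀ with ‖θ₀ − θ_n*‖ ≤ D, D > 0, and T ≥ I − log_γ(Dmn/(2L)); θ̂₁ obtained by I steps of gradient descent on f_{D^{(k)}} from θ̂₀), one has |f_{D^{(k)}}(θ̂₁) − f_{D^{(k)}}(θ_k*)| ≤ (2ML²γ^{2I}/m²) · (1/n + ln(n/k))². -/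
section CULAux

open Set

variable {E : Type*} [NormedAddCommGroup E] [InnerProductSpace ℝ E] [CompleteSpace E]

local notation "⟪" x ", " y "⟫" => @inner ℝ _ _ x y

private lemma cul_line {f : E → ℝ} (hf : Differentiable ℝ f) (x d : E) (t : ℝ) :
    HasDerivAt (fun s : ℝ => f (x + s • d)) ⟪gradient f (x + t • d), d⟫ t := by
  have hline : HasDerivAt (fun s : ℝ => x + s • d) d t := by
    simpa using ((hasDerivAt_id t).smul_const d).const_add x
  have h2 := ((hf (x + t • d)).hasGradientAt.hasFDerivAt).comp_hasDerivAt t hline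
  simpa [InnerProductSpace.toDual_apply_apply, Function.comp_def] using h2

private lemma cul_grad_lower {f : E → ℝ} (hf : Differentiable ℝ f)
    (hc : ConvexOn ℝ Set.univ f) (x y : E) :
    f x + ⟪gradient f x, y - x⟫ ≤ f y := by
  have hφ : ConvexOn ℝ Set.univ (fun t : ℝ => f (x + t • (y - x))) := by
    have h := hc.comp_affineMap (AffineMap.lineMap x y : ℝ →ᵃ[ℝ] E)
    simp only [Set.preimage_univ] at h
    refine h.congr ?_
    intro t _
    simp [AffineMap.lineMap_apply, add_comm]
  have hd := cul_line hf x (y - x) 0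
  have hs := hφ.le_slope_of_hasDerivAt (mem_univ (0:ℝ)) (mem_univ (1:ℝ)) one_pos
    (by simpa using hd)
  rw [slope_def_field] at hs
  simp only [zero_smul, add_zero, one_smul, add_sub_cancel] at hs ⊢
  have : ⟪gradient f x, y - x⟫ ≤ f y - f x := by simpa using hs
  linarith

private lemma cul_descent {f : E → ℝ} (hf : Differentiable ℝ f) {M : ℝ}
    (hlip : ∀ x y, ‖gradient f x - gradient f y‖ ≤ M * ‖x - y‖) (x y : E) :
    f y ≤ f x + ⟪gradient f x, y - x⟫ + M / 2 * ‖y - x‖ ^ 2 := by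
  set d := y - x with hd
  set ψ : ℝ → ℝ := fun t => f (x + t • d) - t * ⟪gradient f x, d⟫ - M / 2 * ‖d‖ ^ 2 * t ^ 2
    with hψ
  have hψd : ∀ t : ℝ, HasDerivAt ψ
      (⟪gradient f (x + t • d), d⟫ - ⟪gradient f x, d⟫ - M * ‖d‖ ^ 2 * t) t := by
    intro t
    have h1 := cul_line hf x d t
    have h2 : HasDerivAt (fun t : ℝ => t * ⟪gradient f x, d⟫) ⟪gradient f x, d⟫ t := by
      simpa using (hasDerivAt_id t).mul_const ⟪gradient f x, d⟫
    have h3 : HasDerivAt (fun t : ℝ => M / 2 * ‖d‖ ^ 2 * t ^ 2) (M * ‖d‖ ^ 2 * t) t := by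
      have := ((hasDerivAt_pow 2 t).const_mul (M / 2 * ‖d‖ ^ 2))
      refine this.congr_deriv ?_
      ring
    exact (h1.sub h2).sub h3
  have hmono : AntitoneOn ψ (Icc (0:ℝ) 1) := by
    apply antitoneOn_of_deriv_nonpos (convex_Icc 0 1)
    · exact fun t _ => ((hψd t).continuousAt).continuousWithinAt
    · exact fun t _ => ((hψd t).differentiableAt).differentiableWithinAt
    · intro t ht
      rw [interior_Icc, Set.mem_Ioo] at ht
      rw [(hψd t).deriv]
      have hb : ⟪gradient f (x + t • d) - gradient f x, d⟫ ≤ M * ‖d‖ ^ 2 * t := by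
        calc ⟪gradient f (x + t • d) - gradient f x, d⟫
            ≤ ‖gradient f (x + t • d) - gradient f x‖ * ‖d‖ := real_inner_le_norm _ _
          _ ≤ M * ‖x + t • d - x‖ * ‖d‖ := by
              have := hlip (x + t • d) x
              nlinarith [norm_nonneg d]
          _ = M * ‖d‖ ^ 2 * t := by
              rw [add_sub_cancel_left, norm_smul]
              simp [abs_of_pos ht.1]
              ring
      rw [inner_sub_left] at hb
      linarith
  have hle := hmono (Set.left_mem_Icc.2 zero_le_one) (Set.right_mem_Icc.2 zero_le_one) zero_le_one
  simp only [hψ] at hle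
  have h0 : x + (0:ℝ) • d = x := by simp
  have h1 : x + (1:ℝ) • d = y := by simp [hd]
  rw [h0, h1] at hle
  simp at hle ⊢
  linarith

private lemma cul_gradsq (x : E) :
    HasGradientAt (fun θ : E => ‖θ‖ ^ 2) ((2:ℝ) • x) x := by
  rw [hasGradientAt_iff_isLittleO]
  have hkey : ∀ θ : E, ‖θ‖ ^ 2 - ‖x‖ ^ 2 - ⟪(2:ℝ) • x, θ - x⟫ = ‖θ - x‖ ^ 2 := by
    intro θ
    rw [← real_inner_self_eq_norm_sq, ← real_inner_self_eq_norm_sq,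
      ← real_inner_self_eq_norm_sq]
    simp [inner_sub_left, inner_sub_right, inner_smul_left, real_inner_comm x θ]
    rw [norm_sub_sq_real, real_inner_comm x θ]; ring
  simp only [hkey]
  rw [Asymptotics.isLittleO_iff]
  intro c hc
  have h1 : ∀ᶠ θ : E in nhds x, ‖θ - x‖ < c := by
    have h0 : Filter.Tendsto (fun θ : E => ‖θ - x‖) (nhds x) (nhds ‖x - x‖) :=
      ((continuous_id.sub continuous_const).norm.tendsto x)
    rw [sub_self, norm_zero] at h0
    exact h0 (gt_mem_nhds hc)
  filter_upwards [h1] with θ hθ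
  have h2 : (0:ℝ) ≤ ‖θ - x‖ := norm_nonneg _
  rw [Real.norm_eq_abs, abs_of_nonneg (sq_nonneg _), pow_two]
  nlinarith

private lemma cul_grad_sub {f : E → ℝ} (hf : Differentiable ℝ f) (m : ℝ) (x : E) :
    HasGradientAt (fun θ => f θ - m / 2 * ‖θ‖ ^ 2) (gradient f x - m • x) x := by
  have h1 := (hf x).hasGradientAt.hasFDerivAt
  have h2 := ((cul_gradsq x).hasFDerivAt).const_mul (m / 2)
  have h3 := h1.sub h2
  rw [hasGradientAt_iff_hasFDerivAt]
  refine h3.congr_fderiv (Eq.symm ?_)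
  rw [map_sub]
  congr 1
  rw [← map_smul]
  congr 1
  rw [smul_smul]
  norm_num

private lemma cul_hdiff_h {f : E → ℝ} (hf : Differentiable ℝ f) (m : ℝ) :
    Differentiable ℝ (fun θ : E => f θ - m / 2 * ‖θ‖ ^ 2) :=
  fun θ => (cul_grad_sub hf m θ).differentiableAt

private lemma cul_hgrad_h {f : E → ℝ} (hf : Differentiable ℝ f) (m : ℝ) (θ : E) :
    gradient (fun θ : E => f θ - m / 2 * ‖θ‖ ^ 2) θ = gradient f θ - m • θ :=
  (cul_grad_sub hf m θ).gradient

private lemma cul_coco_half {g : E → ℝ} (hg : Differentiable ℝ g) (hc : ConvexOn ℝ Set.univ g)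
    {C : ℝ} (hC : 0 < C)
    (hub : ∀ x y, g y ≤ g x + ⟪gradient g x, y - x⟫ + C / 2 * ‖y - x‖ ^ 2) (x y : E) :
    g x + ⟪gradient g x, y - x⟫ + 1 / (2 * C) * ‖gradient g y - gradient g x‖ ^ 2 ≤ g y := by
  set u := gradient g y - gradient g x with hu
  set z := y - (1 / C) • u with hz
  have h1 := cul_grad_lower hg hc x z
  have h2 := hub y z
  have e1 : ⟪gradient g x, z - x⟫ = ⟪gradient g x, y - x⟫ - (1/C) * ⟪gradient g x, u⟫ := by
    have : z - x = (y - x) - (1/C) • u := by rw [hz]; abel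
    rw [this, inner_sub_right, real_inner_smul_right]
  have e2 : ⟪gradient g y, z - y⟫ = -((1/C) * ⟪gradient g y, u⟫) := by
    have : z - y = -((1/C) • u) := by rw [hz]; abel
    rw [this, inner_neg_right, real_inner_smul_right]
  have e3 : C / 2 * ‖z - y‖ ^ 2 = 1 / (2*C) * ‖u‖ ^ 2 := by
    have : z - y = -((1/C) • u) := by rw [hz]; abel
    rw [this, norm_neg, norm_smul, mul_pow, Real.norm_eq_abs, sq_abs]
    field_simp
  have e4 : (1/C) * ⟪gradient g y, u⟫ - (1/C) * ⟪gradient g x, u⟫ = (1/C) * ‖u‖ ^ 2 := by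
    rw [← mul_sub, ← inner_sub_left, ← hu, real_inner_self_eq_norm_sq]
  have e5 : (1/C) * ‖u‖^2 - 1/(2*C) * ‖u‖^2 = 1/(2*C) * ‖u‖^2 := by
    field_simp; ring
  rw [e1] at h1
  rw [e2, e3] at h2
  linarith

private lemma cul_coco {g : E → ℝ} (hg : Differentiable ℝ g) (hc : ConvexOn ℝ Set.univ g)
    {C : ℝ} (hC : 0 < C)
    (hub : ∀ x y, g y ≤ g x + ⟪gradient g x, y - x⟫ + C / 2 * ‖y - x‖ ^ 2) (x y : E) :
    (1/C) * ‖gradient g x - gradient g y‖ ^ 2 ≤ ⟪gradient g x - gradient g y, x - y⟫ := by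
  have h1 := cul_coco_half hg hc hC hub x y
  have h2 := cul_coco_half hg hc hC hub y x
  have e1 : ⟪gradient g x, y - x⟫ = -⟪gradient g x, x - y⟫ := by
    rw [← inner_neg_right]; congr 1; abel
  have e2 : ‖gradient g y - gradient g x‖ = ‖gradient g x - gradient g y‖ := norm_sub_rev _ _
  have e3 : (1/(2*C)) * ‖gradient g x - gradient g y‖^2 +
      (1/(2*C)) * ‖gradient g x - gradient g y‖^2
      = (1/C) * ‖gradient g x - gradient g y‖^2 := by field_simp; ring
  rw [inner_sub_left]
  rw [e1, e2] at h1
  linarith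

private lemma cul_strong_mono {f : E → ℝ} {m : ℝ} (hf : Differentiable ℝ f)
    (hsc : ConvexOn ℝ Set.univ (fun θ : E => f θ - m / 2 * ‖θ‖ ^ 2)) (x y : E) :
    m * ‖x - y‖ ^ 2 ≤ ⟪gradient f x - gradient f y, x - y⟫ := by
  have h1 := cul_grad_lower (cul_hdiff_h hf m) hsc x y
  have h2 := cul_grad_lower (cul_hdiff_h hf m) hsc y x
  rw [cul_hgrad_h hf m] at h1 h2
  have e1 : ⟪gradient f x - m • x, y - x⟫ = -(⟪gradient f x, x - y⟫ - m * ⟪x, x - y⟫) := by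
    rw [show (y - x : E) = -(x - y) by abel, inner_neg_right, inner_sub_left,
      real_inner_smul_left]
  have e2 : ⟪gradient f y - m • y, x - y⟫ = ⟪gradient f y, x - y⟫ - m * ⟪y, x - y⟫ := by
    rw [inner_sub_left, real_inner_smul_left]
  have e3 : ⟪x, x - y⟫ - ⟪y, x - y⟫ = ‖x - y‖^2 := by
    rw [← inner_sub_left, real_inner_self_eq_norm_sq]
  have e4 : m * ⟪x, x - y⟫ - m * ⟪y, x - y⟫ = m * ‖x - y‖^2 := by
    rw [← mul_sub, e3]
  rw [e1] at h1
  rw [e2] at h2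
  rw [inner_sub_left]
  linarith

private lemma cul_h_ub {f : E → ℝ} {m M : ℝ} (hf : Differentiable ℝ f)
    (hlip : ∀ x y, ‖gradient f x - gradient f y‖ ≤ M * ‖x - y‖) (x y : E) :
    (fun θ : E => f θ - m / 2 * ‖θ‖ ^ 2) y ≤ (fun θ : E => f θ - m / 2 * ‖θ‖ ^ 2) x +
      ⟪gradient (fun θ : E => f θ - m / 2 * ‖θ‖ ^ 2) x, y - x⟫ +
      (M - m) / 2 * ‖y - x‖ ^ 2 := by
  simp only [cul_hgrad_h hf m]
  have hdl := cul_descent hf hlip x y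
  have eid : m/2 * ‖y‖^2 - m/2 * ‖x‖^2 - m * ⟪x, y - x⟫ = m/2 * ‖y - x‖^2 := by
    have e : ‖y‖^2 = ‖x‖^2 + 2 * ⟪x, y - x⟫ + ‖y - x‖^2 := by
      rw [← real_inner_self_eq_norm_sq, ← real_inner_self_eq_norm_sq,
        ← real_inner_self_eq_norm_sq, inner_sub_left, inner_sub_right, inner_sub_right,
        real_inner_comm x y]
      ring
    linear_combination (m/2) * e
  have e2 : ⟪gradient f x - m • x, y - x⟫ = ⟪gradient f x, y - x⟫ - m * ⟪x, y - x⟫ := by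
    rw [inner_sub_left, real_inner_smul_left]
  rw [e2]
  linarith

private lemma cul_contract_key {f : E → ℝ} {m M : ℝ} (hf : Differentiable ℝ f) (hm : 0 < m)
    (hmM : m < M)
    (hsc : ConvexOn ℝ Set.univ (fun θ : E => f θ - m / 2 * ‖θ‖ ^ 2))
    (hlip : ∀ x y, ‖gradient f x - gradient f y‖ ≤ M * ‖x - y‖) (x y : E) :
    ‖gradient f x - gradient f y‖ ^ 2 + m * M * ‖x - y‖ ^ 2 ≤
      (M + m) * ⟪gradient f x - gradient f y, x - y⟫ := by
  have hC : (0:ℝ) < M - m := sub_pos.2 hmM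
  have hcoco := cul_coco (cul_hdiff_h hf m) hsc hC (cul_h_ub hf hlip) x y
  rw [cul_hgrad_h hf m, cul_hgrad_h hf m] at hcoco
  set u := gradient f x - gradient f y with hu
  set v := x - y with hv
  have e0 : gradient f x - m • x - (gradient f y - m • y) = u - m • v := by
    rw [hu, hv, smul_sub]; abel
  rw [e0] at hcoco
  have e1 : ‖u - m • v‖^2 = ‖u‖^2 - 2 * m * ⟪u, v⟫ + m^2 * ‖v‖^2 := by
    rw [norm_sub_sq_real, real_inner_smul_right, norm_smul, Real.norm_eq_abs, mul_pow, sq_abs]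
    ring
  have e2 : ⟪u - m • v, v⟫ = ⟪u, v⟫ - m * ‖v‖^2 := by
    rw [inner_sub_left, real_inner_smul_left, real_inner_self_eq_norm_sq]
  rw [e1, e2] at hcoco
  have h' := mul_le_mul_of_nonneg_left hcoco hC.le
  have hne : M - m ≠ 0 := ne_of_gt hC
  have hfrac : (M - m) * (1 / (M - m) * (‖u‖^2 - 2 * m * ⟪u, v⟫ + m^2 * ‖v‖^2))
      = ‖u‖^2 - 2 * m * ⟪u, v⟫ + m^2 * ‖v‖^2 := by
    field_simp
  rw [hfrac] at h'
  nlinarith [h']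

private lemma cul_contract {f : E → ℝ} {m M γ η : ℝ} (hf : Differentiable ℝ f) (hm : 0 < m)
    (hmM : m < M)
    (hsc : ConvexOn ℝ Set.univ (fun θ : E => f θ - m / 2 * ‖θ‖ ^ 2))
    (hlip : ∀ x y, ‖gradient f x - gradient f y‖ ≤ M * ‖x - y‖)
    (hγ : γ = (M - m) / (M + m)) (hη : η = 2 / (m + M)) (x y : E) :
    ‖x - η • gradient f x - (y - η • gradient f y)‖ ≤ γ * ‖x - y‖ := by
  have hmM0 : (0:ℝ) < m + M := by linarith
  set u := gradient f x - gradient f y with hu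
  set v := x - y with hv
  have key := cul_contract_key hf hm hmM hsc hlip x y
  rw [← hu, ← hv] at key
  have e0 : x - η • gradient f x - (y - η • gradient f y) = v - η • u := by
    rw [hu, hv, smul_sub]; abel
  rw [e0]
  have e1 : ‖v - η • u‖^2 = ‖v‖^2 - 2 * η * ⟪u, v⟫ + η^2 * ‖u‖^2 := by
    rw [norm_sub_sq_real, real_inner_smul_right, norm_smul, Real.norm_eq_abs, mul_pow, sq_abs,
      real_inner_comm v u]
    ring
  have hne : m + M ≠ 0 := ne_of_gt hmM0
  have hη2 : η * (m + M) = 2 := by rw [hη, div_mul_cancel₀ _ hne]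
  have h2η : η^2 * (M + m) = 2 * η := by linear_combination η * hη2
  have hid : γ^2 + η^2 * (m * M) = 1 := by
    rw [hγ, hη, div_pow, div_pow, show ((M+m)^2 : ℝ) = (m+M)^2 from by ring,
      div_mul_eq_mul_div, ← add_div,
      show ((M-m)^2 + 2^2*(m*M) : ℝ) = (m+M)^2 from by ring,
      div_self (pow_ne_zero 2 hne)]
  have keyη := mul_le_mul_of_nonneg_left key (sq_nonneg η)
  have h2η' : 2 * η * ⟪u, v⟫ = η^2 * ((M + m) * ⟪u, v⟫) := by
    linear_combination -(⟪u, v⟫ * h2η)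
  have hidv : γ^2 * ‖v‖^2 + η^2 * (m * M) * ‖v‖^2 = ‖v‖^2 := by
    linear_combination ‖v‖^2 * hid
  have hsq : ‖v - η • u‖^2 ≤ (γ * ‖v‖)^2 := by
    rw [e1, mul_pow]
    nlinarith [keyη, h2η', hidv]
  have hγ0 : (0:ℝ) ≤ γ := by
    rw [hγ]; exact div_nonneg (by linarith) (by linarith)
  have := Real.sqrt_le_sqrt hsq
  rwa [Real.sqrt_sq (norm_nonneg _), Real.sqrt_sq (by positivity)] at this

private lemma cul_dirbound {g : E → ℝ} (hg : Differentiable ℝ g)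
    {Θ : Set E} (hΘ : Convex ℝ Θ) {L : ℝ}
    (hlip : ∀ x ∈ Θ, ∀ y ∈ Θ, |g x - g y| ≤ L * ‖x - y‖)
    {x w : E} (hx : x ∈ Θ) (hw : w ∈ Θ) :
    |⟪gradient g x, w - x⟫| ≤ L * ‖w - x‖ := by
  set d := w - x with hd
  have hder : HasDerivAt (fun s : ℝ => g (x + s • d)) ⟪gradient g x, d⟫ 0 := by
    have := cul_line hg x d 0
    simpa using this
  have hslope := hasDerivAt_iff_tendsto_slope.1 hder
  have hslope' : Filter.Tendsto (slope (fun s : ℝ => g (x + s • d)) 0)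
      (nhdsWithin 0 (Ioi 0)) (nhds ⟪gradient g x, d⟫) :=
    hslope.mono_left (nhdsWithin_mono 0 (fun t ht => ne_of_gt ht))
  have habs : Filter.Tendsto (fun t => |slope (fun s : ℝ => g (x + s • d)) 0 t|)
      (nhdsWithin 0 (Ioi 0)) (nhds |⟪gradient g x, d⟫|) := hslope'.abs
  refine le_of_tendsto habs ?_
  filter_upwards [Ioo_mem_nhdsGT_of_mem (by constructor <;> norm_num : (0:ℝ) ∈ Ico 0 1)]
    with t ht
  have ht0 : (0:ℝ) < t := ht.1
  have ht1 : t < 1 := ht.2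
  have hmem : x + t • d ∈ Θ := by
    have := hΘ hx hw (by linarith : (0:ℝ) ≤ 1 - t) (le_of_lt ht0) (by ring)
    convert this using 1
    rw [hd]
    rw [smul_sub, sub_smul, one_smul]
    abel
  rw [slope_def_field]
  have hnum := hlip _ hmem _ hx
  have : x + t • d - x = t • d := by abel
  rw [this, norm_smul, Real.norm_eq_abs, abs_of_pos ht0] at hnum
  rw [sub_zero, abs_div, abs_of_pos ht0, div_le_iff₀ ht0]
  rw [show x + (0:ℝ) • d = x from by simp]
  exact hnum.trans_eq (by ring)

private lemma cul_combo {f₁ f₂ : E → ℝ} (h1 : Differentiable ℝ f₁) (h2 : Differentiable ℝ f₂)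
    (a b : ℝ) (x : E) :
    HasGradientAt (fun θ => a * f₂ θ - b * f₁ θ) (a • gradient f₂ x - b • gradient f₁ x) x := by
  have h := ((h2 x).hasGradientAt.hasFDerivAt.const_mul a).sub
    ((h1 x).hasGradientAt.hasFDerivAt.const_mul b)
  rw [hasGradientAt_iff_hasFDerivAt]
  refine h.congr_fderiv (Eq.symm ?_)
  rw [map_sub, map_smul, map_smul]

private lemma cul_drift {f₁ f₂ : E → ℝ} {c : ℝ} (hc : 0 ≤ c)
    (hf₁ : Differentiable ℝ f₁) (hf₂ : Differentiable ℝ f₂)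
    {m : ℝ} (hm : 0 < m)
    (hsc₂ : ConvexOn ℝ Set.univ (fun θ : E => f₂ θ - m / 2 * ‖θ‖ ^ 2))
    {Θ : Set E} (hΘ : Convex ℝ Θ) {L : ℝ} (hL : 0 ≤ L)
    (hglip : ∀ x ∈ Θ, ∀ y ∈ Θ,
      |((c+1) * f₂ x - c * f₁ x) - ((c+1) * f₂ y - c * f₁ y)| ≤ L * ‖x - y‖)
    {x w : E} (hx : x ∈ Θ) (hw : w ∈ Θ)
    (hcx : gradient f₁ x = 0) (hcw : gradient f₂ w = 0) :
    ‖x - w‖ ≤ L / (m * (c+1)) := by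
  set g : E → ℝ := fun θ => (c+1) * f₂ θ - c * f₁ θ with hgdef
  have hgd : Differentiable ℝ g := fun θ =>
    (cul_combo hf₁ hf₂ (c+1) c θ).differentiableAt
  have hggrad : gradient g x = (c+1) • gradient f₂ x := by
    have := (cul_combo hf₁ hf₂ (c+1) c x).gradient
    rw [this, hcx, smul_zero, sub_zero]
  have hmono := cul_strong_mono hf₂ hsc₂ x w
  rw [hcw, sub_zero] at hmono
  have hinner := cul_dirbound hgd hΘ hglip hx hw
  rw [hggrad] at hinner
  have hc1 : (0:ℝ) < c + 1 := by linarith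
  have e1 : ⟪(c+1) • gradient f₂ x, w - x⟫ = (c+1) * ⟪gradient f₂ x, w - x⟫ :=
    real_inner_smul_left _ _ _
  rw [e1, abs_mul, abs_of_pos hc1] at hinner
  have e2 : ⟪gradient f₂ x, x - w⟫ = -⟪gradient f₂ x, w - x⟫ := by
    rw [show (x - w : E) = -(w - x) by abel, inner_neg_right]
  have hub : ⟪gradient f₂ x, x - w⟫ ≤ L * ‖x - w‖ / (c+1) := by
    rw [e2]
    have h1 : |⟪gradient f₂ x, w - x⟫| ≤ L * ‖w - x‖ / (c+1) := by
      rw [le_div_iff₀ hc1]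
      calc |⟪gradient f₂ x, w - x⟫| * (c+1) = (c+1) * |⟪gradient f₂ x, w - x⟫| := by ring
        _ ≤ L * ‖w - x‖ := hinner
    rw [norm_sub_rev x w]
    have := abs_le.1 h1
    linarith [this.1]
  rcases eq_or_lt_of_le (norm_nonneg (x - w)) with h0 | h0
  · rw [← h0]
    positivity
  · have key : m * ‖x - w‖ ^ 2 ≤ L * ‖x - w‖ / (c+1) := le_trans hmono hub
    rw [le_div_iff₀ (by positivity : (0:ℝ) < m * (c+1))]
    have key2 : m * ‖x - w‖ ^ 2 * (c+1) ≤ L * ‖x - w‖ := (le_div_iff₀ hc1).1 key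
    nlinarith [key2, h0]

private lemma cul_gd {f : E → ℝ} {m M γ η : ℝ} (hf : Differentiable ℝ f) (hm : 0 < m)
    (hmM : m < M)
    (hsc : ConvexOn ℝ Set.univ (fun θ : E => f θ - m / 2 * ‖θ‖ ^ 2))
    (hlip : ∀ x y, ‖gradient f x - gradient f y‖ ≤ M * ‖x - y‖)
    (hγ : γ = (M - m) / (M + m)) (hη : η = 2 / (m + M))
    {θs : E} (hcrit : gradient f θs = 0) (θ₀ : E) (t : ℕ) :
    ‖gdIter f η θ₀ t - θs‖ ≤ γ ^ t * ‖θ₀ - θs‖ := by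
  have hγ0 : (0:ℝ) ≤ γ := by
    rw [hγ]; exact div_nonneg (by linarith) (by linarith)
  induction t with
  | zero => simp [gdIter]
  | succ t ih =>
    have hstep := cul_contract hf hm hmM hsc hlip hγ hη (gdIter f η θ₀ t) θs
    rw [hcrit, smul_zero, sub_zero] at hstep
    calc ‖gdIter f η θ₀ (t+1) - θs‖
        = ‖gdIter f η θ₀ t - η • gradient f (gdIter f η θ₀ t) - θs‖ := rfl
      _ ≤ γ * ‖gdIter f η θ₀ t - θs‖ := hstep
      _ ≤ γ * (γ ^ t * ‖θ₀ - θs‖) := mul_le_mul_of_nonneg_left ih hγ0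
      _ = γ ^ (t+1) * ‖θ₀ - θs‖ := by ring

private lemma cul_empLoss_succ {Z : Type*} (ℓ : E → Z → ℝ) (Dj : Multiset Z) (z : Z) (j : ℕ)
    (hj : Dj.card = j) (hj0 : 0 < j) (θ : E) :
    ((j:ℝ)+1) * empLoss ℓ (z ::ₘ Dj) θ - (j:ℝ) * empLoss ℓ Dj θ = ℓ θ z := by
  unfold empLoss
  rw [Multiset.map_cons, Multiset.sum_cons, Multiset.card_cons, hj]
  have hne : ((j:ℝ)) ≠ 0 := Nat.cast_ne_zero.2 hj0.ne'
  have hne1 : ((j:ℝ)+1) ≠ 0 := by positivity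
  push_cast
  field_simp
  ring

private lemma cul_invlog (j : ℕ) (hj : 1 ≤ j) :
    1 / ((j:ℝ)+1) ≤ Real.log ((j:ℝ)+1) - Real.log j := by
  have hj0 : (0:ℝ) < j := by exact_mod_cast hj
  have h := Real.log_le_sub_one_of_pos (x := (j:ℝ)/((j:ℝ)+1)) (by positivity)
  rw [Real.log_div (ne_of_gt hj0) (by positivity)] at h
  have e : (j:ℝ)/((j:ℝ)+1) - 1 = -(1/((j:ℝ)+1)) := by field_simp; ring
  rw [e] at h
  linarith

private lemma cul_min {f : E → ℝ} {m : ℝ} (hf : Differentiable ℝ f) (hm : 0 < m)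
    (hsc : ConvexOn ℝ Set.univ (fun θ : E => f θ - m / 2 * ‖θ‖ ^ 2))
    {θs : E} (hcrit : gradient f θs = 0) (θ : E) : f θs ≤ f θ := by
  have h1 := cul_grad_lower (cul_hdiff_h hf m) hsc θs θ
  have hg : gradient (fun θ : E => f θ - m / 2 * ‖θ‖ ^ 2) θs = -(m • θs) := by
    rw [(cul_grad_sub hf m θs).gradient, hcrit, zero_sub]
  rw [hg] at h1
  have e2 : ⟪-(m • θs), θ - θs⟫ = -(m * ⟪θs, θ - θs⟫) := by
    rw [inner_neg_left, real_inner_smul_left]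
  rw [e2] at h1
  have eid : m/2 * ‖θ‖^2 - m/2 * ‖θs‖^2 - m * ⟪θs, θ - θs⟫ = m/2 * ‖θ - θs‖^2 := by
    have e : ‖θ‖^2 = ‖θs‖^2 + 2 * ⟪θs, θ - θs⟫ + ‖θ - θs‖^2 := by
      rw [← real_inner_self_eq_norm_sq, ← real_inner_self_eq_norm_sq,
        ← real_inner_self_eq_norm_sq, inner_sub_left, inner_sub_right, inner_sub_right,
        real_inner_comm θs θ]
      ring
    linear_combination (m/2) * e
  nlinarith [sq_nonneg ‖θ - θs‖, hm.le]

end CULAux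

set_option maxHeartbeats 1000000 in
/-- Theorem 2, logarithmic form: certified unlearning bound for strongly
convex losses. -/
theorem certified_unlearning_strongly_convex_log
    {E : Type*} [NormedAddCommGroup E] [InnerProductSpace ℝ E] [CompleteSpace E]
    {Z : Type*} (ℓ : E → Z → ℝ) (Θ : Set E) (hΘ : Convex ℝ Θ)
    (L : ℝ) (hL : 0 < L)
    (hLip : ∀ z : Z, ∀ x ∈ Θ, ∀ y ∈ Θ, |ℓ x z - ℓ y z| ≤ L * ‖x - y‖)
    (k n : ℕ) (hk : 1 ≤ k) (hkn : k ≤ n)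
    (Dchain : ℕ → Multiset Z)
    (hcard : ∀ j, k ≤ j → j ≤ n → (Dchain j).card = j)
    (hchain : ∀ j, k ≤ j → j < n → ∃ z : Z, Dchain (j + 1) = z ::ₘ Dchain j)
    (m M : ℝ) (hm : 0 < m) (hmM : m < M)
    (hdiff : ∀ j, k ≤ j → j ≤ n → Differentiable ℝ (empLoss ℓ (Dchain j)))
    (hsc : ∀ j, k ≤ j → j ≤ n →
      ConvexOn ℝ Set.univ (fun θ => empLoss ℓ (Dchain j) θ - (m / 2) * ‖θ‖ ^ 2))
    (hgrad : ∀ j, k ≤ j → j ≤ n → ∀ x y : E,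
      ‖gradient (empLoss ℓ (Dchain j)) x - gradient (empLoss ℓ (Dchain j)) y‖ ≤ M * ‖x - y‖)
    (θstar : ℕ → E)
    (hcrit : ∀ j, k ≤ j → j ≤ n → gradient (empLoss ℓ (Dchain j)) (θstar j) = 0)
    (hmem : ∀ j, k ≤ j → j ≤ n → θstar j ∈ Θ)
    (γ η : ℝ) (hγ : γ = (M - m) / (M + m)) (hη : η = 2 / (m + M))
    (θ₀ : E) (D : ℝ) (hD : 0 < D) (hinit : ‖θ₀ - θstar n‖ ≤ D)
    (I T : ℕ)
    (hT : (I : ℝ) - Real.log (D * m * n / (2 * L)) / Real.log γ ≤ T)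
    (θhat₀ θhat₁ : E)
    (hθhat₀ : θhat₀ = gdIter (empLoss ℓ (Dchain n)) η θ₀ T)
    (hθhat₁ : θhat₁ = gdIter (empLoss ℓ (Dchain k)) η θhat₀ I) :
    |empLoss ℓ (Dchain k) θhat₁ - empLoss ℓ (Dchain k) (θstar k)| ≤
      (2 * M * L ^ 2 * γ ^ (2 * I) / m ^ 2) *
        (1 / n + Real.log ((n : ℝ) / k)) ^ 2 := by
  have hn1 : 1 ≤ n := le_trans hk hkn
  have hn0 : (0:ℝ) < n := by exact_mod_cast hn1
  have hk0 : (0:ℝ) < k := by exact_mod_cast hk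
  have hγ0 : (0:ℝ) < γ := by
    rw [hγ]; exact div_pos (by linarith) (by linarith)
  have hγ1 : γ < 1 := by
    rw [hγ, div_lt_one (by linarith)]; linarith
  -- hsc in the form used by the aux lemmas
  have hsc' : ∀ j, k ≤ j → j ≤ n →
      ConvexOn ℝ Set.univ (fun θ : E => empLoss ℓ (Dchain j) θ - m / 2 * ‖θ‖ ^ 2) :=
    fun j h1 h2 => hsc j h1 h2
  -- Step 1 : minimizer drift
  have hdrift : ∀ j, k ≤ j → j ≤ n →
      ‖θstar j - θstar k‖ ≤ L / m * (Real.log j - Real.log k) := by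
    intro j hkj
    induction j, hkj using Nat.le_induction with
    | base => intro _; simp
    | succ j hkj ih =>
      intro hjn
      have hjn' : j ≤ n := le_trans (Nat.le_succ j) hjn
      have hjlt : j < n := hjn
      obtain ⟨z, hz⟩ := hchain j hkj hjlt
      have hcardj := hcard j hkj hjn'
      have hj1 : 1 ≤ j := le_trans hk hkj
      have hj0 : 0 < j := hj1
      have hkj1 : k ≤ j + 1 := le_trans hkj (Nat.le_succ j)
      have hcast : ((j:ℝ) + 1) = ((j+1 : ℕ) : ℝ) := by push_cast; ring
      have hrel : ∀ θ : E, ((j:ℝ)+1) * empLoss ℓ (Dchain (j+1)) θ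
          - (j:ℝ) * empLoss ℓ (Dchain j) θ = ℓ θ z := by
        intro θ
        rw [hz]
        exact cul_empLoss_succ ℓ (Dchain j) z j hcardj hj0 θ
      have hstep : ‖θstar j - θstar (j+1)‖ ≤ L / (m * ((j:ℝ)+1)) := by
        apply cul_drift (c := (j:ℝ)) (Nat.cast_nonneg j)
          (hdiff j hkj hjn') (hdiff (j+1) hkj1 hjn) hm (hsc' (j+1) hkj1 hjn) hΘ hL.le
          ?_ (hmem j hkj hjn') (hmem (j+1) hkj1 hjn)
          (hcrit j hkj hjn') (hcrit (j+1) hkj1 hjn)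
        intro x hx y hy
        rw [hrel x, hrel y]
        exact hLip z x hx y hy
      have htri : ‖θstar (j+1) - θstar k‖ ≤
          ‖θstar j - θstar (j+1)‖ + ‖θstar j - θstar k‖ := by
        rw [norm_sub_rev (θstar j) (θstar (j+1))]
        exact norm_sub_le_norm_sub_add_norm_sub _ _ _
      have hLm : (0:ℝ) ≤ L / m := by positivity
      have hlog := cul_invlog j hj1
      have e1 : L / (m * ((j:ℝ)+1)) = L / m * (1/((j:ℝ)+1)) := by
        field_simp
      calc ‖θstar (j+1) - θstar k‖
          ≤ ‖θstar j - θstar (j+1)‖ + ‖θstar j - θstar k‖ := htri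
        _ ≤ L / (m * ((j:ℝ)+1)) + L / m * (Real.log j - Real.log k) :=
            add_le_add hstep (ih hjn')
        _ = L / m * (1/((j:ℝ)+1)) + L / m * (Real.log j - Real.log k) := by rw [e1]
        _ ≤ L / m * (Real.log ((j:ℝ)+1) - Real.log j)
              + L / m * (Real.log j - Real.log k) :=
            add_le_add_left (mul_le_mul_of_nonneg_left hlog hLm) _
        _ = L / m * (Real.log ((j+1 : ℕ):ℝ) - Real.log k) := by
            rw [← hcast]; ring
  -- Step 2 : bound on ‖θhat₀ - θstar n‖
  have hθ0n : ‖θhat₀ - θstar n‖ ≤ γ ^ T * D := by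
    rw [hθhat₀]
    refine le_trans (cul_gd (hdiff n hkn le_rfl) hm hmM (hsc' n hkn le_rfl)
      (hgrad n hkn le_rfl) hγ hη (hcrit n hkn le_rfl) θ₀ T) ?_
    exact mul_le_mul_of_nonneg_left hinit (pow_nonneg hγ0.le T)
  -- Step 3 : the choice of T
  have hTD : γ ^ T * D ≤ γ ^ I * (2 * L / (m * n)) := by
    set X : ℝ := D * m * n / (2 * L) with hX
    have hX0 : 0 < X := by positivity
    have hlogγ : Real.log γ < 0 := Real.log_neg hγ0 hγ1
    have hexp : ∀ s : ℕ, γ ^ s = Real.exp ((s:ℝ) * Real.log γ) := by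
      intro s
      rw [Real.exp_nat_mul, Real.exp_log hγ0]
    have hmul := mul_le_mul_of_nonpos_right hT hlogγ.le
    rw [sub_mul, div_mul_cancel₀ _ (ne_of_lt hlogγ)] at hmul
    have h1 : γ ^ T ≤ γ ^ I * X⁻¹ := by
      rw [hexp T, hexp I]
      calc Real.exp ((T:ℝ) * Real.log γ)
          ≤ Real.exp ((I:ℝ) * Real.log γ - Real.log X) := Real.exp_le_exp.2 hmul
        _ = Real.exp ((I:ℝ) * Real.log γ) * X⁻¹ := by
            rw [Real.exp_sub, Real.exp_log hX0]
            ring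
    have h2 : γ ^ T * D ≤ γ ^ I * X⁻¹ * D :=
      mul_le_mul_of_nonneg_right h1 hD.le
    refine h2.trans_eq ?_
    rw [hX]
    field_simp
  -- Step 4 : distance from θhat₀ to θstar k
  have hθ0k : ‖θhat₀ - θstar k‖ ≤
      γ ^ I * (2 * L / (m * n)) + L / m * (Real.log n - Real.log k) := by
    calc ‖θhat₀ - θstar k‖ ≤ ‖θhat₀ - θstar n‖ + ‖θstar n - θstar k‖ :=
          norm_sub_le_norm_sub_add_norm_sub _ _ _
      _ ≤ γ ^ T * D + L / m * (Real.log n - Real.log k) :=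
          add_le_add hθ0n (hdrift n hkn le_rfl)
      _ ≤ γ ^ I * (2 * L / (m * n)) + L / m * (Real.log n - Real.log k) :=
          add_le_add_left hTD _
  -- Step 5 : distance after the unlearning iterations
  set S : ℝ := 1 / n + Real.log ((n:ℝ) / k) with hS
  have hlogdiv : Real.log ((n:ℝ) / k) = Real.log n - Real.log k :=
    Real.log_div (ne_of_gt hn0) (ne_of_gt hk0)
  have hlognn : 0 ≤ Real.log ((n:ℝ) / k) := by
    apply Real.log_nonneg
    rw [le_div_iff₀ hk0, one_mul]
    exact_mod_cast hkn
  have hS0 : 0 ≤ S := by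
    rw [hS]
    positivity
  have hγI1 : γ ^ I ≤ 1 := pow_le_one₀ hγ0.le hγ1.le
  have hγI0 : (0:ℝ) ≤ γ ^ I := pow_nonneg hγ0.le I
  have hLm0 : (0:ℝ) ≤ L / m := by positivity
  have hcomb : γ ^ I * (2 * L / (m * n)) + L / m * (Real.log n - Real.log k)
      ≤ 2 * L / m * S := by
    rw [hS, ← hlogdiv, mul_add, hlogdiv]
    have ha : γ ^ I * (2 * L / (m * n)) ≤ 2 * L / m * (1 / n) := by
      have e : (2 * L / (m * (n:ℝ)) : ℝ) = 2 * L / m * (1 / n) := by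
        field_simp
      calc γ ^ I * (2 * L / (m * n)) ≤ 1 * (2 * L / (m * (n:ℝ))) :=
            mul_le_mul_of_nonneg_right hγI1 (by positivity)
        _ = 2 * L / m * (1 / n) := by rw [one_mul, e]
    have hb : L / m * (Real.log n - Real.log k) ≤
        2 * L / m * (Real.log n - Real.log k) := by
      apply mul_le_mul_of_nonneg_right _ (hlogdiv ▸ hlognn)
      rw [show (2:ℝ) * L / m = L / m + L / m from by ring]
      linarith
    exact add_le_add ha hb
  have hθ1k : ‖θhat₁ - θstar k‖ ≤ γ ^ I * (2 * L / m) * S := by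
    rw [hθhat₁]
    have h1 := cul_gd (hdiff k le_rfl hkn) hm hmM (hsc' k le_rfl hkn)
      (hgrad k le_rfl hkn) hγ hη (hcrit k le_rfl hkn) θhat₀ I
    refine h1.trans ?_
    calc γ ^ I * ‖θhat₀ - θstar k‖
        ≤ γ ^ I * (2 * L / m * S) :=
          mul_le_mul_of_nonneg_left (hθ0k.trans hcomb) hγI0
      _ = γ ^ I * (2 * L / m) * S := by ring
  -- Step 6 : function-value bound
  have hlow := cul_min (hdiff k le_rfl hkn) hm (hsc' k le_rfl hkn)
    (hcrit k le_rfl hkn) θhat₁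
  have hup : empLoss ℓ (Dchain k) θhat₁ - empLoss ℓ (Dchain k) (θstar k)
      ≤ M / 2 * ‖θhat₁ - θstar k‖ ^ 2 := by
    have := cul_descent (hdiff k le_rfl hkn) (hgrad k le_rfl hkn) (θstar k) θhat₁
    rw [hcrit k le_rfl hkn] at this
    simp only [inner_zero_left] at this
    linarith
  rw [abs_of_nonneg (by linarith)]
  have hsqle : ‖θhat₁ - θstar k‖ ^ 2 ≤ (γ ^ I * (2 * L / m) * S) ^ 2 :=
    pow_le_pow_left₀ (norm_nonneg _) hθ1k 2
  calc empLoss ℓ (Dchain k) θhat₁ - empLoss ℓ (Dchain k) (θstar k)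
      ≤ M / 2 * ‖θhat₁ - θstar k‖ ^ 2 := hup
    _ ≤ M / 2 * (γ ^ I * (2 * L / m) * S) ^ 2 :=
        mul_le_mul_of_nonneg_left hsqle (by linarith : (0:ℝ) ≤ M / 2)
    _ = (2 * M * L ^ 2 * γ ^ (2 * I) / m ^ 2) * S ^ 2 := by
        rw [mul_pow, mul_pow, ← pow_mul, mul_comm I 2]
        ring
end

section
/- Excess-risk inequality via a regularized critical point (core of the proof of Theorem 3): Let f : E → ℝ be differentiable with M-Lipschitz gradient, let m > 0 and D > 0, and define g(θ) = f(θ) + (m/2)‖θ‖². Let θ*ʳ, θ*, θ̂ ∈ E satisfy ∇g(θ*ʳ) = 0, g(θ*ʳ) ≤ g(θ*), ‖θ*ʳ‖ ≤ D, and ‖θ̂ − θ*ʳ‖ ≤ D. Then f(θ̂) − f(θ*) ≤ (M/2)‖θ̂ − θ*ʳ‖² + mD² + (m/2)(‖θ*‖² − ‖θ*ʳ‖²). -/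
open scoped Gradient RealInnerProductSpace

section Aux

variable {E : Type*} [NormedAddCommGroup E] [InnerProductSpace ℝ E] [CompleteSpace E]

lemma hasGradientAt_norm_sq (x : E) :
    HasGradientAt (fun θ : E => ‖θ‖ ^ 2) ((2 : ℝ) • x) x := by
  have h := (hasFDerivAt_id x).inner ℝ (hasFDerivAt_id x)
  rw [hasGradientAt_iff_hasFDerivAt]
  have heq : (fun θ : E => ‖θ‖ ^ 2) = fun θ : E => ⟪θ, θ⟫ :=
    funext fun θ => (real_inner_self_eq_norm_sq θ).symm
  rw [heq]
  refine h.congr_fderiv ?_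
  ext v
  simp [real_inner_smul_left, real_inner_comm]
  ring

lemma gradient_continuous (f : E → ℝ) (M : ℝ)
    (hgrad : ∀ x y : E, ‖gradient f x - gradient f y‖ ≤ M * ‖x - y‖) :
    Continuous (fun x => gradient f x) := by
  have h : LipschitzWith (Real.toNNReal (max M 0)) (fun x => gradient f x) := by
    apply LipschitzWith.of_dist_le_mul
    intro x y
    rw [dist_eq_norm, dist_eq_norm]
    calc ‖gradient f x - gradient f y‖ ≤ M * ‖x - y‖ := hgrad x y
      _ ≤ max M 0 * ‖x - y‖ := by
          gcongr; exact le_max_left M 0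
      _ = (Real.toNNReal (max M 0) : ℝ) * ‖x - y‖ := by
          rw [Real.coe_toNNReal _ (le_max_right M 0)]
  exact h.continuous

lemma descent_lemma (f : E → ℝ) (hdiff : Differentiable ℝ f) (M : ℝ)
    (hgrad : ∀ x y : E, ‖gradient f x - gradient f y‖ ≤ M * ‖x - y‖) (x y : E) :
    f y ≤ f x + ⟪gradient f x, y - x⟫ + M / 2 * ‖y - x‖ ^ 2 := by
  set v := y - x with hv
  have hcont : Continuous (fun x => gradient f x) := gradient_continuous f M hgrad
  have hφ : ∀ t : ℝ, HasDerivAt (fun t : ℝ => f (x + t • v))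
      ⟪gradient f (x + t • v), v⟫ t := by
    intro t
    have hline : HasDerivAt (fun t : ℝ => x + t • v) v t := by
      simpa using ((hasDerivAt_id t).smul_const v).const_add x
    have hf := ((hdiff (x + t • v)).hasGradientAt).hasFDerivAt
    have h := hf.comp_hasDerivAt t hline
    simp only [InnerProductSpace.toDual_apply_apply] at h
    exact h
  have hcont' : Continuous (fun t : ℝ => ⟪gradient f (x + t • v), v⟫) := by
    exact (hcont.comp (continuous_const.add (continuous_id.smul continuous_const))).inner
      continuous_const
  have key : f y - f x = ∫ t in (0:ℝ)..1, ⟪gradient f (x + t • v), v⟫ := by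
    have h := intervalIntegral.integral_eq_sub_of_hasDerivAt
      (f := fun t : ℝ => f (x + t • v)) (fun t _ => hφ t)
      (hcont'.intervalIntegrable 0 1)
    rw [h]
    norm_num [hv]
  have hbound : ∀ t ∈ Set.Icc (0:ℝ) 1,
      ⟪gradient f (x + t • v), v⟫ ≤ ⟪gradient f x, v⟫ + (M * ‖v‖ ^ 2) * t := by
    intro t ht
    have h1 : ⟪gradient f (x + t • v), v⟫ - ⟪gradient f x, v⟫
        = ⟪gradient f (x + t • v) - gradient f x, v⟫ := (inner_sub_left _ _ _).symm
    have h2 : ⟪gradient f (x + t • v) - gradient f x, v⟫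
        ≤ ‖gradient f (x + t • v) - gradient f x‖ * ‖v‖ := real_inner_le_norm _ _
    have h3 : ‖gradient f (x + t • v) - gradient f x‖ ≤ M * ‖x + t • v - x‖ := hgrad _ _
    have h4 : ‖x + t • v - x‖ = t * ‖v‖ := by
      simp [norm_smul, abs_of_nonneg ht.1]
    have h5 := mul_le_mul_of_nonneg_right h3 (norm_nonneg v)
    rw [h4] at h5
    nlinarith [h1, h2, h5]
  have hmono : (∫ t in (0:ℝ)..1, ⟪gradient f (x + t • v), v⟫)
      ≤ ∫ t in (0:ℝ)..1, (⟪gradient f x, v⟫ + (M * ‖v‖ ^ 2) * t) := by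
    apply intervalIntegral.integral_mono_on (by norm_num)
      (hcont'.intervalIntegrable 0 1)
      ((continuous_const.add (continuous_const.mul continuous_id')).intervalIntegrable 0 1)
      hbound
  have hval : (∫ t in (0:ℝ)..1, (⟪gradient f x, v⟫ + (M * ‖v‖ ^ 2) * t))
      = ⟪gradient f x, v⟫ + M / 2 * ‖v‖ ^ 2 := by
    rw [intervalIntegral.integral_add (g := fun t : ℝ => M * ‖v‖ ^ 2 * t) (intervalIntegrable_const)
      ((continuous_const.mul continuous_id').intervalIntegrable 0 1)]
    have e2 : (∫ t in (0:ℝ)..1, M * ‖v‖ ^ 2 * t)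
        = (M * ‖v‖ ^ 2) * ∫ t in (0:ℝ)..1, t :=
      intervalIntegral.integral_const_mul _ _
    rw [e2, integral_id]
    simp
    norm_num; ring
  linarith [key ▸ (hmono.trans_eq hval)]

end Aux

/-- Excess-risk inequality via a regularized critical point
(core of the proof of Theorem 3). -/
theorem excess_risk_via_regularized_critical_point
    {E : Type*} [NormedAddCommGroup E] [InnerProductSpace ℝ E] [CompleteSpace E]
    (f : E → ℝ) (hdiff : Differentiable ℝ f)
    (M : ℝ) (hgrad : ∀ x y : E, ‖gradient f x - gradient f y‖ ≤ M * ‖x - y‖)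
    (m : ℝ) (hm : 0 < m) (D : ℝ) (hD : 0 < D)
    (g : E → ℝ) (hg : g = fun θ => f θ + (m / 2) * ‖θ‖ ^ 2)
    (θstarR θstar θhat : E)
    (hcrit : gradient g θstarR = 0)
    (hmin : g θstarR ≤ g θstar)
    (hnorm : ‖θstarR‖ ≤ D)
    (hclose : ‖θhat - θstarR‖ ≤ D) :
    f θhat - f θstar ≤
      (M / 2) * ‖θhat - θstarR‖ ^ 2 + m * D ^ 2 +
        (m / 2) * (‖θstar‖ ^ 2 - ‖θstarR‖ ^ 2) := by
  subst hg
  -- gradient of g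
  have hgg : HasGradientAt (fun θ => f θ + (m / 2) * ‖θ‖ ^ 2)
      (gradient f θstarR + m • θstarR) θstarR := by
    have h1 : HasGradientAt f (gradient f θstarR) θstarR := (hdiff θstarR).hasGradientAt
    have h2 := hasGradientAt_norm_sq θstarR
    rw [hasGradientAt_iff_hasFDerivAt] at h1 h2 ⊢
    have h3 := h1.add (h2.const_mul (m / 2))
    refine h3.congr_fderiv ?_
    ext v
    simp [inner_add_left, inner_smul_left, real_inner_smul_left]
    ring
  have hgradf : gradient f θstarR = -(m • θstarR) := by
    have := hgg.gradient
    rw [hcrit] at this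
    have h : gradient f θstarR + m • θstarR = 0 := this.symm
    linear_combination (norm := module) h
  -- descent lemma at θhat around θstarR
  have hdesc := descent_lemma f hdiff M hgrad θstarR θhat
  rw [hgradf] at hdesc
  -- inner product bound
  have hinner : ⟪-(m • θstarR), θhat - θstarR⟫ ≤ m * D ^ 2 := by
    have h1 : ⟪-(m • θstarR), θhat - θstarR⟫ = -(m * ⟪θstarR, θhat - θstarR⟫) := by
      rw [inner_neg_left, real_inner_smul_left]
    have h2 : -⟪θstarR, θhat - θstarR⟫ ≤ ‖θstarR‖ * ‖θhat - θstarR‖ := by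
      have := real_inner_le_norm (-θstarR) (θhat - θstarR)
      simpa [inner_neg_left] using this
    have h3 := mul_le_mul_of_nonneg_left h2 hm.le
    have h4 : ‖θstarR‖ * ‖θhat - θstarR‖ ≤ D * D :=
      mul_le_mul hnorm hclose (norm_nonneg _) hD.le
    have h5 := mul_le_mul_of_nonneg_left h4 hm.le
    nlinarith [h1, h3, h5]
  -- from hmin
  have hfmin : f θstarR ≤ f θstar + m / 2 * (‖θstar‖ ^ 2 - ‖θstarR‖ ^ 2) := by
    simp only [] at hmin; linarith
  linarith
end
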